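/- arXiv:1311.0776 — 9 statements merged into one kernel-verified Lean document; each statement's English description precedes it below -/
import Mathlib

section
/- For any ε ≥ 0 and any real x, if f(x) = e^{λ(x−ε)+λ log λ−(λ+1) log(λ+1)} + e^{ε−x} − 1 with λ > 0, then f(x) ≥ 0; equivalently, the indicator bound 𝟙_{x ≥ ε}·(1 − e^{ε−x}) ≤ e^{λ(x−ε)+λ log λ−(λ+1) log(λ+1)} holds for all real x and all λ > 0. -/
open Real

lemma key_ineq (u lam : ℝ) (hu : 0 < u) (hu1 : u ≤ 1) (hlam : 0 < lam) :
    u ^ lam * (1 - u) ≤ lam ^ lam / (lam + 1) ^ (lam + 1) := by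
  have hl1 : (0:ℝ) < lam + 1 := by linarith
  have hp₁ : 0 ≤ u * (lam + 1) / lam := by positivity
  have hp₂ : 0 ≤ (1 - u) * (lam + 1) := by nlinarith
  have hw : lam / (lam + 1) + 1 / (lam + 1) = 1 := by field_simp
  have hsum : lam / (lam + 1) * (u * (lam + 1) / lam) + 1 / (lam + 1) * ((1 - u) * (lam + 1)) = 1 := by
    field_simp
    ring
  have h := Real.geom_mean_le_arith_mean2_weighted (by positivity) (by positivity) hp₁ hp₂ hw
  rw [hsum] at h
  have h2 : ((u * (lam + 1) / lam) ^ (lam / (lam + 1)) * ((1 - u) * (lam + 1)) ^ (1 / (lam + 1))) ^ (lam + 1) ≤ 1 := by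
    calc _ ≤ (1:ℝ) ^ (lam + 1) := Real.rpow_le_rpow (by positivity) h hl1.le
    _ = 1 := Real.one_rpow _
  have e1 : ((u * (lam + 1) / lam) ^ (lam / (lam + 1)) * ((1 - u) * (lam + 1)) ^ (1 / (lam + 1))) ^ (lam + 1)
      = (u * (lam + 1) / lam) ^ lam * ((1 - u) * (lam + 1)) := by
    rw [Real.mul_rpow (Real.rpow_nonneg hp₁ _) (Real.rpow_nonneg hp₂ _),
      ← Real.rpow_mul hp₁, ← Real.rpow_mul hp₂]
    have e2 : lam / (lam + 1) * (lam + 1) = lam := by field_simp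
    have e3 : 1 / (lam + 1) * (lam + 1) = 1 := by field_simp
    rw [e2, e3, Real.rpow_one]
  rw [e1] at h2
  have ep1 : (u * (lam + 1) / lam) ^ lam = u ^ lam * (lam + 1) ^ lam / lam ^ lam := by
    rw [Real.div_rpow (by positivity) hlam.le, Real.mul_rpow hu.le hl1.le]
  rw [ep1] at h2
  have hll : (0:ℝ) < lam ^ lam := Real.rpow_pos_of_pos hlam _
  have hl1l : (0:ℝ) < (lam + 1) ^ lam := Real.rpow_pos_of_pos hl1 _
  have hexp : (lam + 1) ^ (lam + 1) = (lam + 1) ^ lam * (lam + 1) := by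
    rw [Real.rpow_add hl1, Real.rpow_one]
  have h3 : u ^ lam * (lam + 1) ^ lam * ((1 - u) * (lam + 1)) ≤ lam ^ lam := by
    rw [div_mul_eq_mul_div, div_le_one hll] at h2
    exact h2
  rw [hexp, le_div_iff₀ (by positivity)]
  nlinarith [h3]

theorem stmt_0 (ε x lam : ℝ) (hε : 0 ≤ ε) (hlam : 0 < lam) :
    0 ≤ Real.exp (lam * (x - ε) + lam * Real.log lam - (lam + 1) * Real.log (lam + 1))
        + Real.exp (ε - x) - 1 ∧
    (if ε ≤ x then 1 - Real.exp (ε - x) else 0) ≤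
      Real.exp (lam * (x - ε) + lam * Real.log lam - (lam + 1) * Real.log (lam + 1)) := by
  have hApos : (0:ℝ) < Real.exp (lam * (x - ε) + lam * Real.log lam - (lam + 1) * Real.log (lam + 1)) :=
    Real.exp_pos _
  have hupos : (0:ℝ) < Real.exp (ε - x) := Real.exp_pos _
  have main : 1 - Real.exp (ε - x) ≤
      Real.exp (lam * (x - ε) + lam * Real.log lam - (lam + 1) * Real.log (lam + 1)) := by
    rcases le_or_gt (Real.exp (ε - x)) 1 with h1 | h1
    · have hl1 : (0:ℝ) < lam + 1 := by linarith
      have hAe : Real.exp (lam * (x - ε) + lam * Real.log lam - (lam + 1) * Real.log (lam + 1))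
          = (Real.exp (x - ε)) ^ lam * (lam ^ lam / (lam + 1) ^ (lam + 1)) := by
        rw [Real.rpow_def_of_pos (Real.exp_pos _), Real.log_exp,
          Real.rpow_def_of_pos hlam, Real.rpow_def_of_pos hl1,
          ← Real.exp_sub, ← Real.exp_add]
        ring_nf
      have hkey := key_ineq (Real.exp (ε - x)) lam hupos h1 hlam
      have hcancel : (Real.exp (x - ε)) ^ lam * (Real.exp (ε - x)) ^ lam = 1 := by
        rw [← Real.mul_rpow (Real.exp_pos _).le (Real.exp_pos _).le, ← Real.exp_add]
        norm_num
      calc 1 - Real.exp (ε - x)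
          = (Real.exp (x - ε)) ^ lam * ((Real.exp (ε - x)) ^ lam * (1 - Real.exp (ε - x))) := by
            rw [← mul_assoc, hcancel, one_mul]
      _ ≤ (Real.exp (x - ε)) ^ lam * (lam ^ lam / (lam + 1) ^ (lam + 1)) :=
            mul_le_mul_of_nonneg_left hkey (Real.rpow_nonneg (Real.exp_pos _).le _)
      _ = _ := hAe.symm
    · linarith
  refine ⟨by linarith, ?_⟩
  split_ifs
  · exact main
  · exact hApos.le
end

section
/- For every p ∈ [0,1] and every real x, p·e^x + (1−p)·e^{−x} ≤ e^{(2p−1)x + x²/2}. -/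
open Real

private lemma quot_helper (G N : ℝ) (hG : G ≠ 0) :
    (G * G - N * N) / G ^ 2 = 1 - (N / G) ^ 2 := by
  field_simp

theorem stmt_1 (p x : ℝ) (hp0 : 0 ≤ p) (hp1 : p ≤ 1) :
    p * Real.exp x + (1 - p) * Real.exp (-x) ≤ Real.exp ((2 * p - 1) * x + x ^ 2 / 2) := by
  set g : ℝ → ℝ := fun y => p * Real.exp y + (1 - p) * Real.exp (-y) with hg_def
  have hp1' : 0 ≤ 1 - p := by linarith
  have hgpos : ∀ y, 0 < g y := by
    intro y
    simp only [hg_def]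
    nlinarith [Real.exp_pos y, Real.exp_pos (-y), mul_nonneg hp0 (Real.exp_pos y).le,
      mul_nonneg hp1' (Real.exp_pos (-y)).le]
  have hexp' : ∀ y : ℝ, HasDerivAt (fun y : ℝ => (1 - p) * Real.exp (-y))
      (-((1 - p) * Real.exp (-y))) y := by
    intro y
    have := ((Real.hasDerivAt_exp (-y)).comp y ((hasDerivAt_id y).neg)).const_mul (1 - p)
    refine this.congr_deriv ?_
    ring
  have hg' : ∀ y, HasDerivAt g (p * Real.exp y - (1 - p) * Real.exp (-y)) y := by
    intro y
    have h1 : HasDerivAt (fun y : ℝ => p * Real.exp y) (p * Real.exp y) y :=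
      (Real.hasDerivAt_exp y).const_mul p
    exact (h1.add (hexp' y)).congr_deriv (by ring)
  set h : ℝ → ℝ := fun y => (p * Real.exp y - (1 - p) * Real.exp (-y)) / g y with hh_def
  have hh' : ∀ y, HasDerivAt h (1 - (h y) ^ 2) y := by
    intro y
    have h1 : HasDerivAt (fun y : ℝ => p * Real.exp y) (p * Real.exp y) y :=
      (Real.hasDerivAt_exp y).const_mul p
    have hd : HasDerivAt (fun y : ℝ => p * Real.exp y - (1 - p) * Real.exp (-y)) (g y) y := by
      have := h1.sub (hexp' y)
      refine this.congr_deriv ?_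
      simp only [hg_def]
      ring
    have hdiv := hd.div (hg' y) (hgpos y).ne'
    have heq : (g y * g y - (p * Real.exp y - (1 - p) * Real.exp (-y)) *
        (p * Real.exp y - (1 - p) * Real.exp (-y))) / g y ^ 2 = 1 - (h y) ^ 2 := by
      rw [quot_helper _ _ (hgpos y).ne']
    rw [heq] at hdiv
    exact hdiv
  set φ : ℝ → ℝ := fun y => y + (2 * p - 1) - h y with hφ_def
  set f : ℝ → ℝ := fun y => (2 * p - 1) * y + y ^ 2 / 2 - Real.log (g y) with hf_def
  have hf' : ∀ y, HasDerivAt f (φ y) y := by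
    intro y
    have h1 : HasDerivAt (fun y : ℝ => (2 * p - 1) * y + y ^ 2 / 2)
        ((2 * p - 1) + y) y := by
      have := ((hasDerivAt_id y).const_mul (2 * p - 1)).add
        (((hasDerivAt_pow 2 y)).div_const 2)
      refine this.congr_deriv ?_
      push_cast
      ring
    have h2 : HasDerivAt (fun y => Real.log (g y)) (h y) y := by
      have := (hg' y).log (hgpos y).ne'
      simpa [hh_def] using this
    have := h1.sub h2
    refine this.congr_deriv ?_
    simp only [hφ_def]
    ring
  have hφmono : Monotone φ := by
    apply monotone_of_hasDerivAt_nonneg (f' := fun y => (h y) ^ 2)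
    · intro y
      have h1 : HasDerivAt (fun y : ℝ => y + (2 * p - 1)) 1 y := by
        simpa using (hasDerivAt_id y).add_const (2 * p - 1)
      have := h1.sub (hh' y)
      refine this.congr_deriv ?_
      ring
    · intro y
      positivity
  have hh0 : h 0 = 2 * p - 1 := by
    simp only [hh_def, hg_def]
    norm_num
    ring
  have hφ0 : φ 0 = 0 := by
    simp only [hφ_def, hh0]
    ring
  have hf0 : f 0 = 0 := by
    simp [hf_def, hg_def]
  have hfx : 0 ≤ f x := by
    rcases le_or_gt 0 x with hx | hx
    · have hmono : MonotoneOn f (Set.Ici 0) := by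
        apply monotoneOn_of_hasDerivWithinAt_nonneg (convex_Ici 0) (f' := φ)
        · exact fun y _ => (hf' y).continuousAt.continuousWithinAt
        · exact fun y _ => (hf' y).hasDerivWithinAt
        · intro y hy
          rw [interior_Ici] at hy
          have := hφmono (le_of_lt hy)
          rw [hφ0] at this
          exact this
      have := hmono Set.self_mem_Ici hx hx
      rwa [hf0] at this
    · have hanti : AntitoneOn f (Set.Iic 0) := by
        apply antitoneOn_of_hasDerivWithinAt_nonpos (convex_Iic 0) (f' := φ)
        · exact fun y _ => (hf' y).continuousAt.continuousWithinAt
        · exact fun y _ => (hf' y).hasDerivWithinAt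
        · intro y hy
          rw [interior_Iic] at hy
          have := hφmono (le_of_lt hy)
          rw [hφ0] at this
          exact this
      have := hanti (Set.mem_Iic.mpr hx.le) Set.self_mem_Iic hx.le
      rwa [hf0] at this
  have hlog : Real.log (g x) ≤ (2 * p - 1) * x + x ^ 2 / 2 := by
    simp only [hf_def] at hfx
    linarith
  calc g x = Real.exp (Real.log (g x)) := (Real.exp_log (hgpos x)).symm
    _ ≤ Real.exp ((2 * p - 1) * x + x ^ 2 / 2) := Real.exp_le_exp.mpr hlog
end

section
/- For any (ε,δ)-differentially private mechanism M and neighboring databases D, D', the total variation distance between M(D) and M(D') is at most δ + (1−δ)(e^ε − 1)/(e^ε + 1) = 1 − 2(1−δ)/(1+e^ε). -/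
open MeasureTheory

theorem stmt_5 {X : Type*} [MeasurableSpace X]
    (μ ν : Measure X) [IsProbabilityMeasure μ] [IsProbabilityMeasure ν]
    (ε δ : ℝ) (hε : 0 ≤ ε) (hδ0 : 0 ≤ δ) (hδ1 : δ ≤ 1)
    (hDP : ∀ S : Set X, MeasurableSet S →
        (μ S).toReal ≤ Real.exp ε * (ν S).toReal + δ ∧
        (ν S).toReal ≤ Real.exp ε * (μ S).toReal + δ) :
    ∀ S : Set X, MeasurableSet S →
      |(μ S).toReal - (ν S).toReal| ≤ 1 - 2 * (1 - δ) / (1 + Real.exp ε) := by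
  intro S hS
  obtain ⟨h1, h2⟩ := hDP S hS
  obtain ⟨h3, h4⟩ := hDP Sᶜ hS.compl
  have hμc : (μ Sᶜ).toReal = 1 - (μ S).toReal := by
    rw [prob_compl_eq_one_sub hS]
    rw [ENNReal.toReal_sub_of_le prob_le_one (by simp)]
    simp
  have hνc : (ν Sᶜ).toReal = 1 - (ν S).toReal := by
    rw [prob_compl_eq_one_sub hS]
    rw [ENNReal.toReal_sub_of_le prob_le_one (by simp)]
    simp
  rw [hμc, hνc] at h3 h4
  have he : (1:ℝ) ≤ Real.exp ε := Real.one_le_exp hε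
  have hpos : (0:ℝ) < 1 + Real.exp ε := by linarith
  have hkey : 2 * (1 - δ) / (1 + Real.exp ε) * (1 + Real.exp ε) = 2 * (1 - δ) :=
    div_mul_cancel₀ _ hpos.ne'
  rw [abs_le]
  constructor
  · nlinarith [h2, h3]
  · nlinarith [h1, h4]
end

section
/- Let P₀ and P₁ be the probability mass functions on {0,1,2,3} given by P₀ = (δ, (1−δ)e^ε/(1+e^ε), (1−δ)/(1+e^ε), 0) and P₁ = (0, (1−δ)/(1+e^ε), (1−δ)e^ε/(1+e^ε), δ), for ε ≥ 0 and δ ∈ [0,1]. Then for every set S ⊆ {0,1,2,3}, P₀(S) ≤ e^ε P₁(S) + δ and P₁(S) ≤ e^ε P₀(S) + δ; moreover max_S (P₀(S) − e^ε P₁(S)) = δ. -/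
open Finset

set_option maxHeartbeats 2000000 in
theorem stmt_6 (ε δ : ℝ) (hε : 0 ≤ ε) (hδ0 : 0 ≤ δ) (hδ1 : δ ≤ 1)
    (P₀ P₁ : Fin 4 → ℝ)
    (hP₀ : P₀ = ![δ, (1 - δ) * Real.exp ε / (1 + Real.exp ε), (1 - δ) / (1 + Real.exp ε), 0])
    (hP₁ : P₁ = ![0, (1 - δ) / (1 + Real.exp ε), (1 - δ) * Real.exp ε / (1 + Real.exp ε), δ]) :
    (∀ S : Finset (Fin 4),
      (∑ x ∈ S, P₀ x ≤ Real.exp ε * ∑ x ∈ S, P₁ x + δ) ∧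
      (∑ x ∈ S, P₁ x ≤ Real.exp ε * ∑ x ∈ S, P₀ x + δ)) ∧
    IsGreatest {d : ℝ | ∃ S : Finset (Fin 4),
      d = ∑ x ∈ S, P₀ x - Real.exp ε * ∑ x ∈ S, P₁ x} δ := by
  have hE1 : 1 ≤ Real.exp ε := Real.one_le_exp hε
  have hEpos : 0 < Real.exp ε := Real.exp_pos ε
  have hq : 0 < 1 + Real.exp ε := by linarith
  set E := Real.exp ε with hEdef
  set b := (1 - δ) / (1 + E) with hbdef
  have hb0 : 0 ≤ b := div_nonneg (by linarith) hq.le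
  have hbE : b ≤ E * (E * b) := by
    have h2 : (1:ℝ) * b ≤ E * E * b :=
      mul_le_mul_of_nonneg_right (by nlinarith) hb0
    linarith [h2]
  have hP₀' : P₀ = ![δ, E * b, b, 0] := by
    rw [hP₀]; ext i; fin_cases i <;> simp [hbdef] <;> ring
  have hP₁' : P₁ = ![0, b, E * b, δ] := by
    rw [hP₁]; ext i; fin_cases i <;> simp [hbdef] <;> ring
  have key : ∀ S : Finset (Fin 4),
      (∑ x ∈ S, P₀ x ≤ Real.exp ε * ∑ x ∈ S, P₁ x + δ) ∧
      (∑ x ∈ S, P₁ x ≤ Real.exp ε * ∑ x ∈ S, P₀ x + δ) := by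
    intro S
    have hS := Finset.mem_univ S
    fin_cases hS <;>
      constructor <;>
      simp [hP₀', hP₁'] <;>
      nlinarith [mul_nonneg hEpos.le hb0, mul_nonneg hEpos.le hδ0,
        mul_nonneg (mul_nonneg hEpos.le hEpos.le) hb0]
  refine ⟨key, ?_, ?_⟩
  · refine ⟨{0}, ?_⟩
    simp [hP₀', hP₁']
  · rintro d ⟨S, rfl⟩
    have := (key S).1
    linarith
end

section
/- Let P₀, P₁ be probability mass functions on a finite set X, and let P₀^k, P₁^k be their k-fold product distributions on X^k. If for all S ⊆ X we have P₀(S) ≤ e^ε P₁(S) + δ and P₁(S) ≤ e^ε P₀(S) + δ, then for all T ⊆ X^k, P₀^k(T) ≤ e^{kε} P₁^k(T) + kδ and P₁^k(T) ≤ e^{kε} P₀^k(T) + kδ. -/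
open Finset

lemma dp_prod_one_side {X : Type*} [Fintype X] (k : ℕ)
    (ε δ : ℝ) (hε : 0 ≤ ε) (hδ0 : 0 ≤ δ) (hδ1 : δ ≤ 1)
    (P₀ P₁ : X → ℝ) (h₀ : ∀ x, 0 ≤ P₀ x) (h₁ : ∀ x, 0 ≤ P₁ x)
    (hs₀ : ∑ x, P₀ x = 1)
    (hDP : ∀ S : Finset X, ∑ x ∈ S, P₀ x ≤ Real.exp ε * ∑ x ∈ S, P₁ x + δ)
    (T : Finset (Fin k → X)) :
    ∑ x ∈ T, ∏ i, P₀ (x i) ≤ Real.exp (k * ε) * ∑ x ∈ T, ∏ i, P₁ (x i) + k * δ := by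
  set P' : X → ℝ := fun x => min (P₀ x) (Real.exp ε * P₁ x) with hP'
  have hP'0 : ∀ x, 0 ≤ P' x := fun x =>
    le_min (h₀ x) (mul_nonneg (Real.exp_pos ε).le (h₁ x))
  have hP'le : ∀ x, P' x ≤ P₀ x := fun x => min_le_left _ _
  -- D := mass lost
  set D : ℝ := 1 - ∑ x, P' x with hD
  have hDdelta : D ≤ δ := by
    set S : Finset X := Finset.univ.filter (fun x => Real.exp ε * P₁ x < P₀ x) with hS
    have key : ∑ x, (P₀ x - P' x) = ∑ x ∈ S, P₀ x - Real.exp ε * ∑ x ∈ S, P₁ x := by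
      rw [← Finset.sum_filter_add_sum_filter_not Finset.univ
        (fun x => Real.exp ε * P₁ x < P₀ x) (fun x => P₀ x - P' x), Finset.mul_sum,
        ← Finset.sum_sub_distrib]
      have h1 : ∀ x ∈ S, P₀ x - P' x = P₀ x - Real.exp ε * P₁ x := by
        intro x hx
        simp only [hS, Finset.mem_filter] at hx
        rw [hP']
        simp [min_eq_right hx.2.le]
      have h2 : ∀ x ∈ Finset.univ.filter (fun x => ¬ (Real.exp ε * P₁ x < P₀ x)),
          P₀ x - P' x = 0 := by
        intro x hx
        simp only [Finset.mem_filter] at hx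
        rw [hP']
        simp [min_eq_left (not_lt.mp hx.2)]
      rw [Finset.sum_congr rfl h1, Finset.sum_congr rfl h2]
      simp
    have : ∑ x, (P₀ x - P' x) ≤ δ := by
      rw [key]; linarith [hDP S]
    rw [Finset.sum_sub_distrib, hs₀] at this
    linarith
  have hD0 : 0 ≤ D := by
    have : ∑ x, P' x ≤ ∑ x, P₀ x := Finset.sum_le_sum fun x _ => hP'le x
    rw [hs₀] at this; linarith
  -- loss on the product is at most 1 - (1-D)^k ≤ k*D
  have hprodloss : ∑ x ∈ T, ∏ i, P₀ (x i) - ∑ x ∈ T, ∏ i, P' (x i) ≤ k * δ := by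
    have hterm : ∀ x : Fin k → X, ∏ i, P' (x i) ≤ ∏ i, P₀ (x i) :=
      fun x => Finset.prod_le_prod (fun i _ => hP'0 (x i)) (fun i _ => hP'le (x i))
    have hsub : ∑ x ∈ T, (∏ i, P₀ (x i) - ∏ i, P' (x i))
        ≤ ∑ x : Fin k → X, (∏ i, P₀ (x i) - ∏ i, P' (x i)) := by
      apply Finset.sum_le_sum_of_subset_of_nonneg (Finset.subset_univ T)
      intro x _ _
      linarith [hterm x]
    have hfull : ∑ x : Fin k → X, (∏ i, P₀ (x i) - ∏ i, P' (x i))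
        = 1 - (1 - D) ^ k := by
      rw [Finset.sum_sub_distrib]
      have gen : ∀ f : X → ℝ, ∑ x : Fin k → X, ∏ i, f (x i) = (∑ x, f x) ^ k := by
        intro f
        rw [← Fin.prod_const k (∑ x, f x),
          Finset.prod_univ_sum (fun _ => Finset.univ) (fun i j => f j),
          Fintype.piFinset_univ]
      have e₀ := gen P₀
      have e₁ := gen P'
      rw [e₀, e₁, hs₀, one_pow, hD]
      ring_nf
    have hpow : 1 - (k : ℝ) * D ≤ (1 - D) ^ k := by
      have := one_add_mul_le_pow (a := -D) (by linarith : (-2:ℝ) ≤ -D) k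
      simpa [sub_eq_add_neg, mul_comm, mul_neg] using this
    have hkD : (k:ℝ) * D ≤ k * δ :=
      mul_le_mul_of_nonneg_left hDdelta (Nat.cast_nonneg k)
    rw [Finset.sum_sub_distrib] at hsub
    linarith
  -- P' product bounded by exp(kε) * P₁ product
  have hP'bound : ∑ x ∈ T, ∏ i, P' (x i)
      ≤ Real.exp (k * ε) * ∑ x ∈ T, ∏ i, P₁ (x i) := by
    rw [Finset.mul_sum]
    apply Finset.sum_le_sum
    intro x _
    calc ∏ i, P' (x i) ≤ ∏ i, Real.exp ε * P₁ (x i) :=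
          Finset.prod_le_prod (fun i _ => hP'0 (x i)) (fun i _ => min_le_right _ _)
      _ = Real.exp (k * ε) * ∏ i, P₁ (x i) := by
          rw [Finset.prod_mul_distrib, Finset.prod_const, Finset.card_univ,
            Fintype.card_fin, ← Real.exp_nat_mul]
  linarith

theorem stmt_8 {X : Type*} [Fintype X] (k : ℕ) (hk : 1 ≤ k)
    (ε δ : ℝ) (hε : 0 ≤ ε) (hδ0 : 0 ≤ δ) (hδ1 : δ ≤ 1)
    (P₀ P₁ : X → ℝ) (h₀ : ∀ x, 0 ≤ P₀ x) (h₁ : ∀ x, 0 ≤ P₁ x)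
    (hs₀ : ∑ x, P₀ x = 1) (hs₁ : ∑ x, P₁ x = 1)
    (hDP : ∀ S : Finset X,
      (∑ x ∈ S, P₀ x ≤ Real.exp ε * ∑ x ∈ S, P₁ x + δ) ∧
      (∑ x ∈ S, P₁ x ≤ Real.exp ε * ∑ x ∈ S, P₀ x + δ)) :
    ∀ T : Finset (Fin k → X),
      (∑ x ∈ T, ∏ i, P₀ (x i) ≤ Real.exp (k * ε) * ∑ x ∈ T, ∏ i, P₁ (x i) + k * δ) ∧
      (∑ x ∈ T, ∏ i, P₁ (x i) ≤ Real.exp (k * ε) * ∑ x ∈ T, ∏ i, P₀ (x i) + k * δ) := by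
  intro T
  exact ⟨dp_prod_one_side k ε δ hε hδ0 hδ1 P₀ P₁ h₀ h₁ hs₀ (fun S => (hDP S).1) T,
    dp_prod_one_side k ε δ hε hδ0 hδ1 P₁ P₀ h₁ h₀ hs₁ (fun S => (hDP S).2) T⟩
end

section
/- Let ε ≥ 0, δ ∈ [0,1], k ≥ 1, and let P₀ = (δ, (1−δ)e^ε/(1+e^ε), (1−δ)/(1+e^ε), 0), P₁ = (0, (1−δ)/(1+e^ε), (1−δ)e^ε/(1+e^ε), δ) be the canonical pair of distributions on {0,1,2,3}, with k-fold products P₀^k, P₁^k on {0,1,2,3}^k. Then for each i ∈ {0,1,…,⌊k/2⌋}, max_{S ⊆ {0,1,2,3}^k} (P₀^k(S) − e^{(k−2i)ε} P₁^k(S)) = 1 − (1−δ)^k + (1−δ)^k · (Σ_{ℓ=0}^{i−1} C(k,ℓ)(e^{(k−ℓ)ε} − e^{(k−2i+ℓ)ε})) / (1+e^ε)^k. -/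
open Finset

private def enc (k : ℕ) (A : Finset (Fin k)) : Fin k → Fin 4 := fun j => if j ∈ A then 2 else 1

private lemma enc_inj (k : ℕ) : Function.Injective (enc k) := by
  intro A B h
  ext j
  have := congrFun h j
  by_cases hA : j ∈ A <;> by_cases hB : j ∈ B <;> simp_all [enc]

private lemma filter_enc (k : ℕ) (A : Finset (Fin k)) :
    (univ.filter fun j => enc k A j = 2) = A := by
  ext j
  by_cases hA : j ∈ A <;> simp [enc, hA]

private lemma prod_enc (k : ℕ) (f : Fin 4 → ℝ) (A : Finset (Fin k)) :
    ∏ j, f (enc k A j) = f 2 ^ A.card * f 1 ^ (k - A.card) := by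
  unfold enc
  rw [show (∏ j, f (if j ∈ A then 2 else 1)) = ∏ j, (if j ∈ A then f 2 else f 1) by
    apply Finset.prod_congr rfl; intro j _; split <;> rfl]
  rw [Finset.prod_ite]
  simp only [Finset.prod_const]
  congr 1
  · congr 1
    rw [Finset.filter_mem_eq_inter, Finset.univ_inter]
  · rw [Finset.filter_not, Finset.filter_mem_eq_inter, Finset.univ_inter,
      Finset.card_sdiff_of_subset (Finset.subset_univ A)]
    simp

private lemma enc_eq_self (k : ℕ) (x : Fin k → Fin 4) (hx : ∀ j, x j = 1 ∨ x j = 2) :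
    enc k (univ.filter fun j => x j = 2) = x := by
  funext j
  rcases hx j with h | h <;> simp [enc, h]

theorem stmt_9 (ε δ : ℝ) (hε : 0 ≤ ε) (hδ0 : 0 ≤ δ) (hδ1 : δ ≤ 1)
    (k : ℕ) (hk : 1 ≤ k) (i : ℕ) (hi : 2 * i ≤ k)
    (P₀ P₁ : Fin 4 → ℝ)
    (hP₀ : P₀ = ![δ, (1 - δ) * Real.exp ε / (1 + Real.exp ε), (1 - δ) / (1 + Real.exp ε), 0])
    (hP₁ : P₁ = ![0, (1 - δ) / (1 + Real.exp ε), (1 - δ) * Real.exp ε / (1 + Real.exp ε), δ]) :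
    IsGreatest {d : ℝ | ∃ S : Finset (Fin k → Fin 4),
        d = ∑ x ∈ S, ∏ j, P₀ (x j)
            - Real.exp (((k : ℝ) - 2 * i) * ε) * ∑ x ∈ S, ∏ j, P₁ (x j)}
      (1 - (1 - δ) ^ k + (1 - δ) ^ k *
        (∑ l ∈ Finset.range i, (k.choose l : ℝ) *
          (Real.exp (((k : ℝ) - l) * ε) - Real.exp (((k : ℝ) - 2 * i + l) * ε)))
        / (1 + Real.exp ε) ^ k) := by
  classical
  have hepos : (0:ℝ) < Real.exp ε := Real.exp_pos ε
  have he1 : (1:ℝ) ≤ Real.exp ε := Real.one_le_exp hε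
  set e : ℝ := Real.exp ε with he
  set c : ℝ := 1 + e with hc
  have hcpos : (0:ℝ) < c := by positivity
  have h1δ : (0:ℝ) ≤ 1 - δ := by linarith
  have hik : i ≤ k := by omega
  set E : ℝ := Real.exp (((k : ℝ) - 2 * i) * ε) with hEdef
  have hcast : ∀ m : ℕ, m ≤ k → ((k - m : ℕ) : ℝ) = (k : ℝ) - m := by
    intro m hm; push_cast [Nat.cast_sub hm]; ring
  have hEeq : E = e ^ (k - 2 * i) := by
    rw [hEdef, ← Real.exp_nat_mul, hcast _ hi]; push_cast; ring
  have hEpos : 0 < E := Real.exp_pos _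
  -- entry values
  have h00 : P₀ 0 = δ := by simp [hP₀]
  have h01 : P₀ 1 = (1 - δ) * e / c := by simp [hP₀]
  have h02 : P₀ 2 = (1 - δ) / c := by simp [hP₀]
  have h03 : P₀ 3 = 0 := by simp [hP₀]
  have h10 : P₁ 0 = 0 := by simp [hP₁]
  have h11 : P₁ 1 = (1 - δ) / c := by simp [hP₁]
  have h12 : P₁ 2 = (1 - δ) * e / c := by simp [hP₁]
  have h13 : P₁ 3 = δ := by simp [hP₁]
  have hP₀nn : ∀ v, 0 ≤ P₀ v := by
    intro v
    fin_cases v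
    · show (0:ℝ) ≤ P₀ 0; rw [h00]; exact hδ0
    · show (0:ℝ) ≤ P₀ 1; rw [h01]; positivity
    · show (0:ℝ) ≤ P₀ 2; rw [h02]; positivity
    · show (0:ℝ) ≤ P₀ 3; rw [h03]
  have hP₁nn : ∀ v, 0 ≤ P₁ v := by
    intro v
    fin_cases v
    · show (0:ℝ) ≤ P₁ 0; rw [h10]
    · show (0:ℝ) ≤ P₁ 1; rw [h11]; positivity
    · show (0:ℝ) ≤ P₁ 2; rw [h12]; positivity
    · show (0:ℝ) ≤ P₁ 3; rw [h13]; exact hδ0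
  -- the combined power value lemma
  have hval : ∀ m : ℕ, m ≤ k →
      ((1 - δ) / c) ^ m * ((1 - δ) * e / c) ^ (k - m) = (1 - δ) ^ k / c ^ k * e ^ (k - m) := by
    intro m hm
    obtain ⟨n, rfl⟩ : ∃ n, k = m + n := ⟨k - m, by omega⟩
    simp only [Nat.add_sub_cancel_left, pow_add, div_pow, mul_pow]
    field_simp
  have hval' : ∀ m : ℕ, m ≤ k →
      ((1 - δ) * e / c) ^ m * ((1 - δ) / c) ^ (k - m) = (1 - δ) ^ k / c ^ k * e ^ m := by
    intro m hm
    obtain ⟨n, rfl⟩ : ∃ n, k = m + n := ⟨k - m, by omega⟩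
    simp only [Nat.add_sub_cancel_left, pow_add, div_pow, mul_pow]
    field_simp
  -- products along enc
  have hprod0 : ∀ A : Finset (Fin k),
      ∏ j, P₀ (enc k A j) = (1 - δ) ^ k / c ^ k * e ^ (k - A.card) := by
    intro A
    rw [prod_enc, h01, h02, hval _ (Finset.card_le_univ A |>.trans (by simp))]
  have hprod1 : ∀ A : Finset (Fin k),
      ∏ j, P₁ (enc k A j) = (1 - δ) ^ k / c ^ k * e ^ A.card := by
    intro A
    rw [prod_enc, h11, h12, hval' _ (Finset.card_le_univ A |>.trans (by simp))]
  -- predicate defining the optimal set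
  set Q : (Fin k → Fin 4) → Prop := fun x =>
    (∃ j, x j = 0) ∨ ((∀ j, x j = 1 ∨ x j = 2) ∧ (univ.filter fun j => x j = 2).card < i)
    with hQ
  have hcardle : ∀ A : Finset (Fin k), A.card ≤ k := fun A =>
    le_trans (Finset.card_le_univ A) (by simp)
  have hD : (0:ℝ) ≤ (1 - δ) ^ k / c ^ k := by positivity
  -- sign lemmas
  have hQpos : ∀ x, Q x → 0 ≤ ∏ j, P₀ (x j) - E * ∏ j, P₁ (x j) := by
    intro x hx
    rcases hx with ⟨j, hj⟩ | ⟨h12, hcard⟩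
    · have hz : ∏ j, P₁ (x j) = 0 :=
        Finset.prod_eq_zero (Finset.mem_univ j) (by rw [hj, h10])
      rw [hz, mul_zero, sub_zero]
      exact Finset.prod_nonneg fun j _ => hP₀nn _
    · have hxA := enc_eq_self k x h12
      set A := univ.filter fun j => x j = 2 with hA
      have h0 : ∏ j, P₀ (x j) = (1-δ)^k/c^k * e^(k - A.card) := by
        rw [← hxA]; exact hprod0 A
      have h1 : ∏ j, P₁ (x j) = (1-δ)^k/c^k * e^(A.card) := by
        rw [← hxA]; exact hprod1 A
      rw [h0, h1, hEeq, show e^(k-2*i) * ((1-δ)^k/c^k * e^(A.card))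
          = (1-δ)^k/c^k * e^(k-2*i+A.card) by rw [pow_add]; ring]
      have hle : e^(k-2*i+A.card) ≤ e^(k-A.card) := by
        apply pow_le_pow_right₀ he1
        have := hcardle A
        omega
      have := mul_le_mul_of_nonneg_left hle hD
      linarith
  have hQneg : ∀ x, ¬ Q x → ∏ j, P₀ (x j) - E * ∏ j, P₁ (x j) ≤ 0 := by
    intro x hx
    simp only [hQ, not_or, not_and, not_lt, not_exists] at hx
    obtain ⟨hx0, hx12⟩ := hx
    by_cases hx3 : ∃ j, x j = 3
    · obtain ⟨j, hj⟩ := hx3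
      have hz : ∏ j, P₀ (x j) = 0 :=
        Finset.prod_eq_zero (Finset.mem_univ j) (by rw [hj, h03])
      rw [hz]
      have : 0 ≤ ∏ j, P₁ (x j) := Finset.prod_nonneg fun j _ => hP₁nn _
      nlinarith
    · push_neg at hx3
      have hv : ∀ v : Fin 4, v ≠ 0 → v ≠ 3 → v = 1 ∨ v = 2 := by decide
      have h12 : ∀ j, x j = 1 ∨ x j = 2 := fun j => hv _ (hx0 j) (hx3 j)
      have hcard := hx12 h12
      have hxA := enc_eq_self k x h12
      set A := univ.filter fun j => x j = 2 with hA
      have h0 : ∏ j, P₀ (x j) = (1-δ)^k/c^k * e^(k - A.card) := by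
        rw [← hxA]; exact hprod0 A
      have h1 : ∏ j, P₁ (x j) = (1-δ)^k/c^k * e^(A.card) := by
        rw [← hxA]; exact hprod1 A
      rw [h0, h1, hEeq, show e^(k-2*i) * ((1-δ)^k/c^k * e^(A.card))
          = (1-δ)^k/c^k * e^(k-2*i+A.card) by rw [pow_add]; ring]
      have hle : e^(k-A.card) ≤ e^(k-2*i+A.card) := by
        apply pow_le_pow_right₀ he1
        have := hcardle A
        omega
      have := mul_le_mul_of_nonneg_left hle hD
      linarith
  -- sum over functions as powers
  have hpower : ∀ (g : Fin 4 → ℝ) (t : Finset (Fin 4)),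
      ∑ x ∈ Fintype.piFinset (fun _ : Fin k => t), ∏ j, g (x j) = (∑ v ∈ t, g v)^k := by
    intro g t
    rw [← Finset.prod_univ_sum]
    simp
  have hsumall : ∑ x : Fin k → Fin 4, ∏ j, P₀ (x j) = 1 := by
    rw [← Fintype.piFinset_univ, hpower]
    have h1 : ∑ v : Fin 4, P₀ v = 1 := by
      rw [Fin.sum_univ_four, h00, h01, h02, h03]
      field_simp
      rw [hc]; ring
    rw [h1, one_pow]
  have h123 : ∑ v ∈ ({1,2,3} : Finset (Fin 4)), P₀ v = 1 - δ := by
    rw [show ({1,2,3} : Finset (Fin 4)) = insert 1 (insert 2 {3}) from rfl,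
      Finset.sum_insert (by decide), Finset.sum_insert (by decide), Finset.sum_singleton,
      h01, h02, h03]
    field_simp
    rw [hc]; ring
  have hS0compl : univ.filter (fun x : Fin k → Fin 4 => ¬ ∃ j, x j = 0)
      = Fintype.piFinset (fun _ : Fin k => ({1,2,3} : Finset (Fin 4))) := by
    have hv : ∀ v : Fin 4, (¬ v = 0) ↔ (v = 1 ∨ v = 2 ∨ v = 3) := by decide
    ext x
    simp only [Finset.mem_filter, Finset.mem_univ, true_and, not_exists,
      Fintype.mem_piFinset, Finset.mem_insert, Finset.mem_singleton, hv]
  have hS0P0 : ∑ x ∈ univ.filter (fun x : Fin k → Fin 4 => ∃ j, x j = 0), ∏ j, P₀ (x j)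
      = 1 - (1-δ)^k := by
    have h := Finset.sum_filter_add_sum_filter_not univ
      (fun x : Fin k → Fin 4 => ∃ j, x j = 0) (fun x => ∏ j, P₀ (x j))
    rw [hS0compl, hpower, h123, hsumall] at h
    linarith
  have hS0P1 : ∑ x ∈ univ.filter (fun x : Fin k → Fin 4 => ∃ j, x j = 0), ∏ j, P₁ (x j)
      = 0 := by
    apply Finset.sum_eq_zero
    intro x hx
    obtain ⟨j, hj⟩ := (Finset.mem_filter.1 hx).2
    exact Finset.prod_eq_zero (Finset.mem_univ j) (by rw [hj, h10])
  -- the large-count part as an image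
  have hS1 : univ.filter (fun x : Fin k → Fin 4 =>
        (∀ j, x j = 1 ∨ x j = 2) ∧ (univ.filter fun j => x j = 2).card < i)
      = ((Finset.range i).biUnion
          (fun l => Finset.powersetCard l (univ : Finset (Fin k)))).image (enc k) := by
    ext x
    simp only [Finset.mem_filter, Finset.mem_univ, true_and, Finset.mem_image,
      Finset.mem_biUnion, Finset.mem_range, Finset.mem_powersetCard_univ]
    constructor
    · rintro ⟨h12, hcard⟩
      exact ⟨univ.filter fun j => x j = 2, ⟨_, hcard, rfl⟩, enc_eq_self k x h12⟩
    · rintro ⟨A, ⟨l, hl, hAl⟩, rfl⟩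
      refine ⟨fun j => ?_, ?_⟩
      · unfold enc; split
        · right; rfl
        · left; rfl
      · rw [filter_enc]; omega
  have hdisjU : (↑(Finset.range i) : Set ℕ).PairwiseDisjoint
      (fun l => Finset.powersetCard l (univ : Finset (Fin k))) := by
    intro a _ b _ hab
    apply Finset.disjoint_left.2
    intro A h1 h2
    exact hab (by rw [← Finset.mem_powersetCard_univ.1 h1, Finset.mem_powersetCard_univ.1 h2])
  have himg : ∀ g : Fin 4 → ℝ,
      ∑ x ∈ univ.filter (fun x : Fin k → Fin 4 =>
        (∀ j, x j = 1 ∨ x j = 2) ∧ (univ.filter fun j => x j = 2).card < i), ∏ j, g (x j)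
      = ∑ l ∈ Finset.range i, (k.choose l : ℝ) * (g 2 ^ l * g 1 ^ (k - l)) := by
    intro g
    rw [hS1, Finset.sum_image (fun x _ y _ h => enc_inj k h), Finset.sum_biUnion hdisjU]
    refine Finset.sum_congr rfl fun l hl => ?_
    rw [Finset.sum_congr rfl (fun A hA => by
      rw [prod_enc, Finset.mem_powersetCard_univ.1 hA]),
      Finset.sum_const, Finset.card_powersetCard, Finset.card_univ, Fintype.card_fin,
      nsmul_eq_mul]
  have hlk : ∀ l ∈ Finset.range i, l ≤ k := fun l hl => by
    have := Finset.mem_range.1 hl; omega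
  have hS1P0 : ∑ x ∈ univ.filter (fun x : Fin k → Fin 4 =>
        (∀ j, x j = 1 ∨ x j = 2) ∧ (univ.filter fun j => x j = 2).card < i), ∏ j, P₀ (x j)
      = ∑ l ∈ Finset.range i, (k.choose l : ℝ) * ((1-δ)^k/c^k * e^(k-l)) := by
    rw [himg P₀]
    exact Finset.sum_congr rfl fun l hl => by rw [h01, h02, hval l (hlk l hl)]
  have hS1P1 : ∑ x ∈ univ.filter (fun x : Fin k → Fin 4 =>
        (∀ j, x j = 1 ∨ x j = 2) ∧ (univ.filter fun j => x j = 2).card < i), ∏ j, P₁ (x j)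
      = ∑ l ∈ Finset.range i, (k.choose l : ℝ) * ((1-δ)^k/c^k * e^l) := by
    rw [himg P₁]
    exact Finset.sum_congr rfl fun l hl => by rw [h11, h12, hval' l (hlk l hl)]
  -- splitting the optimal set
  have hunion : univ.filter Q
      = univ.filter (fun x : Fin k → Fin 4 => ∃ j, x j = 0)
        ∪ univ.filter (fun x : Fin k → Fin 4 =>
            (∀ j, x j = 1 ∨ x j = 2) ∧ (univ.filter fun j => x j = 2).card < i) := by
    ext x
    simp only [hQ, Finset.mem_filter, Finset.mem_univ, true_and, Finset.mem_union]
  have hdisj : Disjoint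
      (univ.filter (fun x : Fin k → Fin 4 => ∃ j, x j = 0))
      (univ.filter (fun x : Fin k → Fin 4 =>
        (∀ j, x j = 1 ∨ x j = 2) ∧ (univ.filter fun j => x j = 2).card < i)) := by
    apply Finset.disjoint_left.2
    intro x h0 h1
    obtain ⟨j, hj⟩ := (Finset.mem_filter.1 h0).2
    rcases (Finset.mem_filter.1 h1).2.1 j with h | h <;> rw [hj] at h <;> exact absurd h (by decide)
  -- the exponential conversions
  have hexp1 : ∀ l ∈ Finset.range i, Real.exp (((k:ℝ) - l) * ε) = e^(k-l) := by
    intro l hl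
    rw [← hcast l (hlk l hl), ← Real.exp_nat_mul]
  have hexp2 : ∀ l ∈ Finset.range i, Real.exp (((k:ℝ) - 2*i + l) * ε) = e^(k - 2*i + l) := by
    intro l hl
    have hc2 : ((k - 2*i + l : ℕ) : ℝ) = (k:ℝ) - 2*i + l := by
      push_cast [Nat.cast_sub hi]; ring
    rw [← hc2, ← Real.exp_nat_mul]
  -- the key value of the optimal set
  have hkey : ∑ x ∈ univ.filter Q, (∏ j, P₀ (x j) - E * ∏ j, P₁ (x j))
      = 1 - (1 - δ) ^ k + (1 - δ) ^ k *
        (∑ l ∈ Finset.range i, (k.choose l : ℝ) *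
          (Real.exp (((k : ℝ) - l) * ε) - Real.exp (((k : ℝ) - 2 * i + l) * ε)))
        / c ^ k := by
    have hterm : ∀ l ∈ Finset.range i,
        (k.choose l : ℝ) * ((1-δ)^k/c^k * e^(k-l)) - E * ((k.choose l : ℝ) * ((1-δ)^k/c^k * e^l))
        = (1-δ)^k * ((k.choose l : ℝ) *
            (Real.exp (((k:ℝ) - l) * ε) - Real.exp (((k:ℝ) - 2*i + l) * ε))) / c^k := by
      intro l hl
      rw [hexp1 l hl, hexp2 l hl, hEeq, pow_add]
      ring
    rw [hunion, Finset.sum_union hdisj, Finset.sum_sub_distrib, Finset.sum_sub_distrib,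
      ← Finset.mul_sum, ← Finset.mul_sum, hS0P0, hS0P1, hS1P0, hS1P1, mul_zero, sub_zero]
    conv_lhs => rw [Finset.mul_sum, ← Finset.sum_sub_distrib, Finset.sum_congr rfl hterm,
      ← Finset.sum_div, ← Finset.mul_sum]
  have hrw : ∀ T : Finset (Fin k → Fin 4),
      ∑ x ∈ T, ∏ j, P₀ (x j) - E * ∑ x ∈ T, ∏ j, P₁ (x j)
      = ∑ x ∈ T, (∏ j, P₀ (x j) - E * ∏ j, P₁ (x j)) := by
    intro T
    rw [Finset.sum_sub_distrib]
    congr 1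
    rw [Finset.mul_sum]
  constructor
  · exact ⟨univ.filter Q, by rw [hrw, hkey]⟩
  · rintro d ⟨S, rfl⟩
    rw [hrw, ← hkey]
    calc ∑ x ∈ S, (∏ j, P₀ (x j) - E * ∏ j, P₁ (x j))
        = ∑ x ∈ S.filter Q, (∏ j, P₀ (x j) - E * ∏ j, P₁ (x j))
          + ∑ x ∈ S.filter (fun x => ¬ Q x), (∏ j, P₀ (x j) - E * ∏ j, P₁ (x j)) :=
          (Finset.sum_filter_add_sum_filter_not S Q _).symm
      _ ≤ ∑ x ∈ S.filter Q, (∏ j, P₀ (x j) - E * ∏ j, P₁ (x j)) := by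
          have hnp : ∑ x ∈ S.filter (fun x => ¬ Q x),
              (∏ j, P₀ (x j) - E * ∏ j, P₁ (x j)) ≤ 0 :=
            Finset.sum_nonpos fun x hx => hQneg x (Finset.mem_filter.1 hx).2
          linarith
      _ ≤ ∑ x ∈ univ.filter Q, (∏ j, P₀ (x j) - E * ∏ j, P₁ (x j)) :=
          Finset.sum_le_sum_of_subset_of_nonneg
            (Finset.filter_subset_filter Q (Finset.subset_univ S))
            (fun x hx _ => hQpos x (Finset.mem_filter.1 hx).2)
end

section
/- Let ε ≥ 0 and let Q₀, Q₁ be the distributions on {1,2} with Q₀(1) = e^ε/(1+e^ε), Q₀(2) = 1/(1+e^ε), Q₁(1) = 1/(1+e^ε), Q₁(2) = e^ε/(1+e^ε). Let Z = log(Q₀^k(X^k)/Q₁^k(X^k)) where X^k ∼ Q₀^k is a vector of k i.i.d. samples from Q₀. Then for every λ ∈ ℝ, E[e^{λZ}] ≤ exp(k·λε·(e^ε−1)/(e^ε+1) + k·λ²ε²/2). -/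
open Finset

lemma aux_sinh_le_mul_cosh (x : ℝ) (hx : 0 ≤ x) : Real.sinh x ≤ x * Real.cosh x := by
  have key : ∀ y : ℝ, HasDerivAt (fun t => t * Real.cosh t - Real.sinh t)
      (y * Real.sinh y) y := by
    intro y
    have h1 := ((hasDerivAt_id y).mul (Real.hasDerivAt_cosh y)).sub (Real.hasDerivAt_sinh y)
    refine h1.congr_deriv ?_
    simp only [id_eq, one_mul]; ring
  have mono : MonotoneOn (fun t => t * Real.cosh t - Real.sinh t) (Set.Ici 0) := by
    apply monotoneOn_of_deriv_nonneg (convex_Ici 0)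
    · exact (Continuous.sub (continuous_id.mul Real.continuous_cosh) Real.continuous_sinh).continuousOn
    · intro y _; exact (key y).differentiableAt.differentiableWithinAt
    · intro y hy
      rw [(key y).deriv]
      rw [interior_Ici] at hy
      have hy0 : (0:ℝ) ≤ y := le_of_lt hy
      have := Real.sinh_nonneg_iff.mpr hy0
      positivity
  have h := mono Set.self_mem_Ici hx hx
  simpa using h

lemma aux_sinh_le_exp (x : ℝ) (hx : 0 ≤ x) : Real.sinh x ≤ x * Real.exp (x^2/4) := by
  have h2 : Real.sinh x = 2 * Real.sinh (x/2) * Real.cosh (x/2) := by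
    rw [← Real.sinh_two_mul]; ring_nf
  have hA := aux_sinh_le_mul_cosh (x/2) (by linarith)
  have hC := Real.cosh_le_exp_half_sq (x/2)
  have hcosh : (0:ℝ) < Real.cosh (x/2) := Real.cosh_pos (x := x/2)
  have hexp : Real.exp ((x/2)^2/2) * Real.exp ((x/2)^2/2) = Real.exp (x^2/4) := by
    rw [← Real.exp_add]; ring_nf
  calc Real.sinh x = 2 * Real.sinh (x/2) * Real.cosh (x/2) := h2
    _ ≤ 2 * ((x/2) * Real.cosh (x/2)) * Real.cosh (x/2) := by nlinarith
    _ = x * (Real.cosh (x/2) * Real.cosh (x/2)) := by ring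
    _ ≤ x * (Real.exp ((x/2)^2/2) * Real.exp ((x/2)^2/2)) := by
        apply mul_le_mul_of_nonneg_left _ hx
        exact mul_le_mul hC hC (le_of_lt hcosh) (le_of_lt (Real.exp_pos _))
    _ = x * Real.exp (x^2/4) := by rw [hexp]

lemma aux_neg (a : ℝ) (ha0 : 0 ≤ a) (ha1 : a ≤ 1) (x : ℝ) (hx : 0 ≤ x) :
    Real.exp (a*x) * (Real.cosh x - a * Real.sinh x) ≤ Real.exp (x^2/2) := by
  set F : ℝ → ℝ := fun y => Real.exp (y^2/2) - Real.exp (a*y) * (Real.cosh y - a * Real.sinh y)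
    with hF
  have key : ∀ y : ℝ, HasDerivAt F
      (y * Real.exp (y^2/2) - (1 - a^2) * (Real.exp (a*y) * Real.sinh y)) y := by
    intro y
    have hsq : HasDerivAt (fun t : ℝ => t^2/2) y y := by
      have := (hasDerivAt_pow 2 y).div_const 2
      refine this.congr_deriv ?_
      norm_num
    have h1 : HasDerivAt (fun t : ℝ => Real.exp (t^2/2)) (y * Real.exp (y^2/2)) y := by
      have := hsq.exp
      convert this using 1; ring
    have hay : HasDerivAt (fun t : ℝ => a*t) a y := by
      simpa using (hasDerivAt_id y).const_mul a
    have h2 : HasDerivAt (fun t : ℝ => Real.exp (a*t)) (a * Real.exp (a*y)) y := by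
      have := hay.exp
      convert this using 1; ring
    have h3 : HasDerivAt (fun t : ℝ => Real.cosh t - a * Real.sinh t)
        (Real.sinh y - a * Real.cosh y) y :=
      (Real.hasDerivAt_cosh y).sub ((Real.hasDerivAt_sinh y).const_mul a)
    have h4 := h1.sub (h2.mul h3)
    refine h4.congr_deriv ?_
    ring
  have mono : MonotoneOn F (Set.Ici 0) := by
    apply monotoneOn_of_deriv_nonneg (convex_Ici 0)
    · exact Continuous.continuousOn (by fun_prop)
    · intro y _; exact (key y).differentiableAt.differentiableWithinAt
    · intro y hy
      rw [(key y).deriv]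
      rw [interior_Ici] at hy
      have hy0 : (0:ℝ) ≤ y := le_of_lt hy
      have hs : 0 ≤ Real.sinh y := Real.sinh_nonneg_iff.mpr hy0
      -- (1-a^2) * exp(a y) ≤ exp(y^2/4)
      have e1 : (1 - a^2) ≤ Real.exp (-a^2) := by
        have := Real.add_one_le_exp (-a^2); linarith
    -- exp(-a^2)*exp(a*y) = exp(a*y - a^2) ≤ exp(y^2/4)
      have e2 : Real.exp (-a^2) * Real.exp (a*y) ≤ Real.exp (y^2/4) := by
        rw [← Real.exp_add]
        apply Real.exp_le_exp.mpr
        nlinarith [sq_nonneg (a - y/2)]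
      have e3 : (1 - a^2) * (Real.exp (a*y) * Real.sinh y) ≤ Real.exp (y^2/4) * Real.sinh y := by
        have h5 : (1 - a^2) * Real.exp (a*y) ≤ Real.exp (y^2/4) := by
          calc (1 - a^2) * Real.exp (a*y) ≤ Real.exp (-a^2) * Real.exp (a*y) := by
                apply mul_le_mul_of_nonneg_right e1 (le_of_lt (Real.exp_pos _))
            _ ≤ Real.exp (y^2/4) := e2
        calc (1 - a^2) * (Real.exp (a*y) * Real.sinh y)
            = ((1 - a^2) * Real.exp (a*y)) * Real.sinh y := by ring
          _ ≤ Real.exp (y^2/4) * Real.sinh y := mul_le_mul_of_nonneg_right h5 hs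
      have e4 : Real.exp (y^2/4) * Real.sinh y ≤ y * Real.exp (y^2/2) := by
        calc Real.exp (y^2/4) * Real.sinh y ≤ Real.exp (y^2/4) * (y * Real.exp (y^2/4)) := by
              apply mul_le_mul_of_nonneg_left (aux_sinh_le_exp y hy0) (le_of_lt (Real.exp_pos _))
          _ = y * (Real.exp (y^2/4) * Real.exp (y^2/4)) := by ring
          _ = y * Real.exp (y^2/2) := by rw [← Real.exp_add]; ring_nf
      linarith
  have h := mono Set.self_mem_Ici hx hx
  have hF0 : F 0 = 0 := by simp [hF]
  rw [hF0] at h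
  simp only [hF] at h
  linarith

lemma aux_step (a x : ℝ) (ha0 : 0 ≤ a) (ha1 : a ≤ 1) :
    Real.cosh x + a * Real.sinh x ≤ Real.exp (a*x + x^2/2) := by
  rcases le_or_gt 0 x with hx | hx
  · have h1 : Real.cosh x ≤ Real.exp (x^2/2) := Real.cosh_le_exp_half_sq x
    have h2 : Real.sinh x ≤ x * Real.exp (x^2/2) := by
      calc Real.sinh x ≤ x * Real.exp (x^2/4) := aux_sinh_le_exp x hx
        _ ≤ x * Real.exp (x^2/2) := by
            apply mul_le_mul_of_nonneg_left _ hx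
            apply Real.exp_le_exp.mpr; nlinarith [sq_nonneg x]
    have h3 : 1 + a*x ≤ Real.exp (a*x) := by
      have := Real.add_one_le_exp (a*x); linarith
    have hax : 0 ≤ a * x := mul_nonneg ha0 hx
    calc Real.cosh x + a * Real.sinh x ≤ Real.exp (x^2/2) + a * (x * Real.exp (x^2/2)) := by
          have := mul_le_mul_of_nonneg_left h2 ha0; linarith
      _ = (1 + a*x) * Real.exp (x^2/2) := by ring
      _ ≤ Real.exp (a*x) * Real.exp (x^2/2) :=
          mul_le_mul_of_nonneg_right h3 (le_of_lt (Real.exp_pos _))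
      _ = Real.exp (a*x + x^2/2) := (Real.exp_add _ _).symm
  · have hy0 : 0 ≤ -x := by linarith
    have h := aux_neg a ha0 ha1 (-x) hy0
    rw [Real.cosh_neg, Real.sinh_neg] at h
    have hpos := Real.exp_pos (a * (-x))
    have : Real.cosh x + a * Real.sinh x ≤ Real.exp ((-x)^2/2) / Real.exp (a*(-x)) := by
      rw [le_div_iff₀ hpos]
      calc (Real.cosh x + a * Real.sinh x) * Real.exp (a * (-x))
          = Real.exp (a * (-x)) * (Real.cosh x - a * -Real.sinh x) := by ring
        _ ≤ Real.exp ((-x)^2/2) := h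
    calc Real.cosh x + a * Real.sinh x ≤ Real.exp ((-x)^2/2) / Real.exp (a*(-x)) := this
      _ = Real.exp ((-x)^2/2 - a*(-x)) := (Real.exp_sub _ _).symm
      _ = Real.exp (a*x + x^2/2) := by ring_nf

theorem stmt_10 (ε : ℝ) (hε : 0 ≤ ε) (k : ℕ) (hk : 1 ≤ k)
    (Q₀ Q₁ : Fin 2 → ℝ)
    (hQ₀ : Q₀ = ![Real.exp ε / (1 + Real.exp ε), 1 / (1 + Real.exp ε)])
    (hQ₁ : Q₁ = ![1 / (1 + Real.exp ε), Real.exp ε / (1 + Real.exp ε)]) :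
    ∀ lam : ℝ,
      ∑ x : Fin k → Fin 2, (∏ i, Q₀ (x i)) *
          Real.exp (lam * Real.log ((∏ i, Q₀ (x i)) / (∏ i, Q₁ (x i)))) ≤
      Real.exp (k * (lam * ε * (Real.exp ε - 1) / (Real.exp ε + 1)) +
        k * (lam ^ 2 * ε ^ 2) / 2) := by
  intro lam
  have hE : (1:ℝ) ≤ Real.exp ε := Real.one_le_exp hε
  have hEpos : (0:ℝ) < Real.exp ε := Real.exp_pos ε
  have hden : (0:ℝ) < 1 + Real.exp ε := by linarith
  -- positivity of entries
  have hQ₀pos : ∀ i, 0 < Q₀ i := by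
    intro i; fin_cases i <;> simp [hQ₀] <;> positivity
  have hQ₁pos : ∀ i, 0 < Q₁ i := by
    intro i; fin_cases i <;> simp [hQ₁] <;> positivity
  set f : Fin 2 → ℝ := fun i => Q₀ i * Real.exp (lam * Real.log (Q₀ i / Q₁ i)) with hf
  -- rewrite summand as product
  have hsummand : ∀ x : Fin k → Fin 2,
      (∏ i, Q₀ (x i)) * Real.exp (lam * Real.log ((∏ i, Q₀ (x i)) / (∏ i, Q₁ (x i)))) =
      ∏ i, f (x i) := by
    intro x
    have hlog : Real.log ((∏ i, Q₀ (x i)) / (∏ i, Q₁ (x i))) =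
        ∑ i, Real.log (Q₀ (x i) / Q₁ (x i)) := by
      rw [show (∏ i, Q₀ (x i)) / (∏ i, Q₁ (x i)) = ∏ i, (Q₀ (x i) / Q₁ (x i)) by
        rw [Finset.prod_div_distrib]]
      rw [Real.log_prod]
      intro i _
      exact ne_of_gt (div_pos (hQ₀pos _) (hQ₁pos _))
    rw [hlog, Finset.mul_sum, Real.exp_sum, hf]
    rw [← Finset.prod_mul_distrib]
  rw [Finset.sum_congr rfl (fun x _ => hsummand x)]
  rw [← Fintype.sum_pow f k]
  -- compute the single sum
  set t := lam * ε with ht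
  set a := (Real.exp ε - 1) / (Real.exp ε + 1) with ha
  have ha0 : 0 ≤ a := div_nonneg (by linarith) (by linarith)
  have ha1 : a ≤ 1 := by
    rw [ha, div_le_one (by linarith)]; linarith
  have hsum : ∑ i, f i = Real.cosh t + a * Real.sinh t := by
    rw [Fin.sum_univ_two, hf]
    simp only [hQ₀, hQ₁]
    have h0 : (![Real.exp ε / (1 + Real.exp ε), 1 / (1 + Real.exp ε)] : Fin 2 → ℝ) 0 /
        (![1 / (1 + Real.exp ε), Real.exp ε / (1 + Real.exp ε)] : Fin 2 → ℝ) 0 = Real.exp ε := by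
      simp
      field_simp
    have h1 : (![Real.exp ε / (1 + Real.exp ε), 1 / (1 + Real.exp ε)] : Fin 2 → ℝ) 1 /
        (![1 / (1 + Real.exp ε), Real.exp ε / (1 + Real.exp ε)] : Fin 2 → ℝ) 1 = Real.exp (-ε) := by
      simp [Real.exp_neg]
      field_simp
    rw [h0, h1, Real.log_exp, Real.log_exp]
    rw [Real.cosh_eq, Real.sinh_eq, ht, ha]
    simp only [Matrix.cons_val_zero, Matrix.cons_val_one, Matrix.head_cons]
    rw [show lam * -ε = -(lam * ε) by ring, Real.exp_neg]
    have hexppos := Real.exp_pos (lam * ε)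
    field_simp
    ring
  have hS0 : 0 ≤ ∑ i, f i := by
    apply Finset.sum_nonneg
    intro i _
    exact le_of_lt (mul_pos (hQ₀pos i) (Real.exp_pos _))
  have hstep : ∑ i, f i ≤ Real.exp (a*t + t^2/2) := by
    rw [hsum]; exact aux_step a t ha0 ha1
  calc (∑ i, f i)^k ≤ (Real.exp (a*t + t^2/2))^k := pow_le_pow_left₀ hS0 hstep k
    _ = Real.exp (k * (a*t + t^2/2)) := by
        rw [← Real.exp_nat_mul]
    _ = Real.exp (k * (lam * ε * (Real.exp ε - 1) / (Real.exp ε + 1)) +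
        k * (lam ^ 2 * ε ^ 2) / 2) := by
        congr 1
        rw [ht, ha]
        ring
end

section
/- Let Q₀, Q₁ be probability mass functions on a finite set X with Q₁(x) > 0 whenever Q₀(x) > 0, let ε̃ ∈ ℝ, and let B = {x : Q₀(x) ≥ e^{ε̃} Q₁(x)}. Then for every λ ≥ 0, Q₀(B) − e^{ε̃} Q₁(B) ≤ E_{X∼Q₀}[e^{λ(Z−ε̃) + λ log λ − (λ+1) log(λ+1)}], where Z = log(Q₀(X)/Q₁(X)). -/
open Finset

lemma key_ineq_s11 (lam t : ℝ) (hlam : 0 ≤ lam) (ht : 0 ≤ t) :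
    1 - Real.exp (-t) ≤
      Real.exp (lam * t + lam * Real.log lam - (lam + 1) * Real.log (lam + 1)) := by
  rcases eq_or_lt_of_le hlam with h0 | hL
  · subst h0
    simp only [zero_mul, Real.log_zero, zero_add, zero_sub]
    norm_num
    have := Real.exp_pos (-t)
    nlinarith [Real.exp_pos (-t)]
  · rcases eq_or_lt_of_le ht with h0 | hT
    · subst h0
      simp only [neg_zero, Real.exp_zero, sub_self]
      positivity
    · set s : ℝ := Real.exp (-t) with hs
      have hs0 : 0 < s := Real.exp_pos _
      have hs1 : s < 1 := by
        rw [hs, ← Real.exp_zero]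
        exact Real.exp_lt_exp.mpr (by linarith)
      set a : ℝ := lam / (lam + 1) with ha
      have hL1 : (0:ℝ) < lam + 1 := by linarith
      have ha0 : 0 < a := div_pos hL hL1
      have ha1 : a < 1 := (div_lt_one hL1).mpr (by linarith)
      have h1 : Real.log ((1 - s) / (1 - a)) ≤ (1 - s) / (1 - a) - 1 :=
        Real.log_le_sub_one_of_pos (div_pos (by linarith) (by linarith))
      have h2 : Real.log (s / a) ≤ s / a - 1 :=
        Real.log_le_sub_one_of_pos (div_pos hs0 ha0)
      rw [Real.log_div (by linarith) (by linarith)] at h1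
      rw [Real.log_div (ne_of_gt hs0) (ne_of_gt ha0)] at h2
      have hzero : (1 - s) / (1 - a) - 1 + lam * (s / a - 1) = 0 := by
        rw [ha]
        field_simp
        ring
      have hcomb : Real.log (1 - s) + lam * Real.log s ≤
          Real.log (1 - a) + lam * Real.log a := by
        nlinarith [mul_le_mul_of_nonneg_left h2 hlam]
      have hla : Real.log a = Real.log lam - Real.log (lam + 1) := by
        rw [ha, Real.log_div (ne_of_gt hL) (ne_of_gt hL1)]
      have hl1a : Real.log (1 - a) = -Real.log (lam + 1) := by
        have : 1 - a = 1 / (lam + 1) := by rw [ha]; field_simp; ring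
        rw [this, Real.log_div one_ne_zero (ne_of_gt hL1), Real.log_one, zero_sub]
      have hlog : Real.log (1 - s) ≤
          lam * t + lam * Real.log lam - (lam + 1) * Real.log (lam + 1) := by
        have hls : Real.log s = -t := Real.log_exp _
        rw [hla, hl1a] at hcomb
        nlinarith
      calc 1 - s = Real.exp (Real.log (1 - s)) := (Real.exp_log (by linarith)).symm
        _ ≤ _ := Real.exp_le_exp.mpr hlog

theorem stmt_11 {X : Type*} [Fintype X] [DecidableEq X]
    (Q₀ Q₁ : X → ℝ) (h₀ : ∀ x, 0 ≤ Q₀ x) (h₁ : ∀ x, 0 ≤ Q₁ x)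
    (hs₀ : ∑ x, Q₀ x = 1) (hs₁ : ∑ x, Q₁ x = 1)
    (hpos : ∀ x, 0 < Q₀ x → 0 < Q₁ x)
    (eps : ℝ) (lam : ℝ) (hlam : 0 ≤ lam) :
    ∑ x ∈ Finset.univ.filter (fun x => Real.exp eps * Q₁ x ≤ Q₀ x), Q₀ x
      - Real.exp eps *
        ∑ x ∈ Finset.univ.filter (fun x => Real.exp eps * Q₁ x ≤ Q₀ x), Q₁ x ≤
    ∑ x, Q₀ x * Real.exp (lam * (Real.log (Q₀ x / Q₁ x) - eps)
        + lam * Real.log lam - (lam + 1) * Real.log (lam + 1)) := by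
  set B := Finset.univ.filter (fun x => Real.exp eps * Q₁ x ≤ Q₀ x) with hB
  set f : X → ℝ := fun x => Q₀ x * Real.exp (lam * (Real.log (Q₀ x / Q₁ x) - eps)
        + lam * Real.log lam - (lam + 1) * Real.log (lam + 1)) with hf
  have hfnn : ∀ x, 0 ≤ f x := fun x => mul_nonneg (h₀ x) (Real.exp_pos _).le
  have hpt : ∀ x ∈ B, Q₀ x - Real.exp eps * Q₁ x ≤ f x := by
    intro x hx
    rw [hB, Finset.mem_filter] at hx
    obtain ⟨-, hx⟩ := hx
    rcases eq_or_lt_of_le (h₀ x) with hq0 | hq0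
    · have hq1 : Q₁ x = 0 := by
        have := mul_nonneg (Real.exp_pos eps).le (h₁ x)
        nlinarith [Real.exp_pos eps, h₁ x]
      simp [hf, ← hq0, hq1]
    · have hq1 : 0 < Q₁ x := hpos x hq0
      set t : ℝ := Real.log (Q₀ x / Q₁ x) - eps with htdef
      have ht : 0 ≤ t := by
        have h1 : Real.exp eps ≤ Q₀ x / Q₁ x := (le_div_iff₀ hq1).mpr hx
        have := Real.log_le_log (Real.exp_pos eps) h1
        rw [Real.log_exp] at this
        rw [htdef]; linarith
      have hexp : Real.exp (-t) = Real.exp eps * Q₁ x / Q₀ x := by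
        rw [htdef, neg_sub, Real.exp_sub, Real.exp_log (div_pos hq0 hq1)]
        field_simp
      have := key_ineq_s11 lam t hlam ht
      rw [hexp] at this
      have h2 := mul_le_mul_of_nonneg_left this hq0.le
      rw [hf]
      calc Q₀ x - Real.exp eps * Q₁ x
          = Q₀ x * (1 - Real.exp eps * Q₁ x / Q₀ x) := by field_simp
        _ ≤ _ := h2
  calc (∑ x ∈ B, Q₀ x) - Real.exp eps * ∑ x ∈ B, Q₁ x
      = ∑ x ∈ B, (Q₀ x - Real.exp eps * Q₁ x) := by
        rw [Finset.sum_sub_distrib, Finset.mul_sum]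
    _ ≤ ∑ x ∈ B, f x := Finset.sum_le_sum hpt
    _ ≤ ∑ x, f x := Finset.sum_le_sum_of_subset_of_nonneg (Finset.subset_univ B)
        (fun x _ _ => hfnn x)
end

section
/- Let ε > 0, δ ∈ [0,1], k ≥ 1, and ε̃ = kε(e^ε−1)/(e^ε+1) + ε√(2k log(1/δ̃)) for δ̃ ∈ (0,1). Let P₀, P₁ be the canonical (ε,δ)-DP pair of distributions on {0,1,2,3} (P₀ = (δ, (1−δ)e^ε/(1+e^ε), (1−δ)/(1+e^ε), 0), P₁ reversed). Then max_{S ⊆ {0,1,2,3}^k}(P₀^k(S) − e^{ε̃} P₁^k(S)) ≤ 1 − (1−δ)^k(1−δ̃). -/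
open Finset

section Aux

def Gset (k : ℕ) : Finset (Fin k → Fin 4) :=
  Finset.univ.filter (fun x => ∀ j, x j = 1 ∨ x j = 2)

def mcount {k : ℕ} (x : Fin k → Fin 4) : ℕ :=
  (Finset.univ.filter (fun j => x j = 1)).card

lemma mem_Gset {k : ℕ} (x : Fin k → Fin 4) : x ∈ Gset k ↔ ∀ j, x j = 1 ∨ x j = 2 := by
  simp [Gset]

lemma mcount_le {k : ℕ} (x : Fin k → Fin 4) : mcount x ≤ k := by
  calc mcount x ≤ Finset.univ.card := Finset.card_filter_le _ _
    _ = k := by simp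

lemma aux_prod_split {k : ℕ} (x : Fin k → Fin 4) (hx : ∀ j, x j = 1 ∨ x j = 2)
    (f : Fin 4 → ℝ) :
    ∏ j, f (x j) = f 1 ^ mcount x * f 2 ^ (k - mcount x) := by
  classical
  rw [← Finset.prod_filter_mul_prod_filter_not Finset.univ (fun j => x j = 1)]
  have hcard : (Finset.univ.filter (fun j => ¬ x j = 1)).card = k - mcount x := by
    have h := Finset.card_filter_add_card_filter_not
      (s := (Finset.univ : Finset (Fin k))) (p := fun j => x j = 1)
    have h2 : (Finset.univ : Finset (Fin k)).card = k := by simp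
    unfold mcount
    omega
  congr 1
  · rw [Finset.prod_congr rfl (fun j hj => by rw [(Finset.mem_filter.mp hj).2]),
      Finset.prod_const]
    rfl
  · have heq : ∀ j ∈ Finset.univ.filter (fun j => ¬ x j = 1), f (x j) = f 2 := by
      intro j hj
      have h2 := (Finset.mem_filter.mp hj).2
      rcases hx j with h | h
      · exact absurd h h2
      · rw [h]
    rw [Finset.prod_congr rfl heq, Finset.prod_const, hcard]

lemma aux_sum_univ (k : ℕ) (f : Fin 4 → ℝ) :
    ∑ x : Fin k → Fin 4, ∏ j, f (x j) = (f 0 + f 1 + f 2 + f 3) ^ k := by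
  rw [show f 0 + f 1 + f 2 + f 3 = ∑ v, f v from (Fin.sum_univ_four f).symm]
  exact (Fintype.sum_pow f k).symm

lemma aux_sumG_prod (k : ℕ) (f : Fin 4 → ℝ) (h0 : f 0 = 0) (h3 : f 3 = 0) :
    ∑ x ∈ Gset k, ∏ j, f (x j) = (f 1 + f 2) ^ k := by
  classical
  have hsub : ∑ x ∈ Gset k, ∏ j, f (x j) = ∑ x : Fin k → Fin 4, ∏ j, f (x j) := by
    apply Finset.sum_subset (Finset.subset_univ _)
    intro x _ hxG
    rw [mem_Gset] at hxG
    push_neg at hxG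
    obtain ⟨j, hj1, hj2⟩ := hxG
    apply Finset.prod_eq_zero (Finset.mem_univ j)
    have hv := (x j).isLt
    have e1 : (x j).val ≠ 1 := fun h => hj1 (Fin.ext h)
    have e2 : (x j).val ≠ 2 := fun h => hj2 (Fin.ext h)
    have : (x j).val = 0 ∨ (x j).val = 3 := by omega
    rcases this with h | h
    · rw [show x j = 0 from Fin.ext h, h0]
    · rw [show x j = 3 from Fin.ext h, h3]
  rw [hsub, aux_sum_univ, h0, h3, zero_add, add_zero]

lemma aux_sumG_pow (k : ℕ) (a b : ℝ) :
    ∑ x ∈ Gset k, a ^ mcount x * b ^ (k - mcount x) = (a + b) ^ k := by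
  calc ∑ x ∈ Gset k, a ^ mcount x * b ^ (k - mcount x)
      = ∑ x ∈ Gset k, ∏ j, (![0, a, b, 0] : Fin 4 → ℝ) (x j) := by
        apply Finset.sum_congr rfl
        intro x hx
        rw [aux_prod_split x ((mem_Gset x).mp hx)]
        simp
    _ = ((![0, a, b, 0] : Fin 4 → ℝ) 1 + (![0, a, b, 0] : Fin 4 → ℝ) 2) ^ k :=
        aux_sumG_prod k _ (by simp) (by simp)
    _ = (a + b) ^ k := by simp

end Aux

lemma hoeff_bernoulli (p : ℝ) (hp0 : 0 < p) (hp1 : p < 1) :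
    ∀ l : ℝ, 0 ≤ l → 1 - p + p * Real.exp l ≤ Real.exp (l * p + l ^ 2 / 8) := by
  have hu : ∀ l : ℝ, 0 < 1 - p + p * Real.exp l := fun l => by
    have := Real.exp_pos l; nlinarith
  have hud : ∀ l : ℝ, HasDerivAt (fun l => 1 - p + p * Real.exp l) (p * Real.exp l) l :=
    fun l => by simpa using ((Real.hasDerivAt_exp l).const_mul p).const_add (1 - p)
  have hgd : ∀ l : ℝ, HasDerivAt (fun l => p + l / 4 - p * Real.exp l / (1 - p + p * Real.exp l))
      (1 / 4 - p * (1 - p) * Real.exp l / (1 - p + p * Real.exp l) ^ 2) l := by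
    intro l
    have h1 : HasDerivAt (fun l => p * Real.exp l) (p * Real.exp l) l :=
      (Real.hasDerivAt_exp l).const_mul p
    have h2 : HasDerivAt (fun l => p * Real.exp l / (1 - p + p * Real.exp l))
        ((p * Real.exp l * (1 - p + p * Real.exp l) - p * Real.exp l * (p * Real.exp l)) /
          (1 - p + p * Real.exp l) ^ 2) l :=
      h1.div (hud l) (ne_of_gt (hu l))
    have h3 : HasDerivAt (fun l : ℝ => p + l / 4) (1 / 4) l := by
      simpa using ((hasDerivAt_id l).div_const 4).const_add p
    have h4 := h3.sub h2
    refine h4.congr_deriv ?_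
    have hul := hu l
    ring
  have hg_mono : Monotone (fun l => p + l / 4 - p * Real.exp l / (1 - p + p * Real.exp l)) := by
    apply monotone_of_deriv_nonneg
    · exact fun l => (hgd l).differentiableAt
    · intro l
      rw [(hgd l).deriv]
      have hul := hu l
      have hel := Real.exp_pos l
      have key : 4 * (p * (1 - p) * Real.exp l) ≤ (1 - p + p * Real.exp l) ^ 2 := by
        nlinarith [sq_nonneg ((1 - p) - p * Real.exp l)]
      have h5 : p * (1 - p) * Real.exp l / (1 - p + p * Real.exp l) ^ 2 ≤ 1 / 4 := by
        rw [div_le_iff₀ (by positivity)]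
        linarith
      linarith
  have hg0 : p + (0:ℝ) / 4 - p * Real.exp 0 / (1 - p + p * Real.exp 0) = 0 := by
    norm_num
  have hfd : ∀ l : ℝ, HasDerivAt (fun l => l * p + l ^ 2 / 8 - Real.log (1 - p + p * Real.exp l))
      (p + l / 4 - p * Real.exp l / (1 - p + p * Real.exp l)) l := by
    intro l
    have h1 : HasDerivAt (fun l : ℝ => l * p + l ^ 2 / 8) (p + l / 4) l := by
      have ha : HasDerivAt (fun l : ℝ => l * p) p l := by
        simpa using (hasDerivAt_id l).mul_const p
      have hb : HasDerivAt (fun l : ℝ => l ^ 2 / 8) (2 * l / 8) l := by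
        simpa using (hasDerivAt_pow 2 l).div_const 8
      have := ha.add hb
      refine this.congr_deriv ?_
      ring
    have h2 : HasDerivAt (fun l => Real.log (1 - p + p * Real.exp l))
        (p * Real.exp l / (1 - p + p * Real.exp l)) l :=
      (hud l).log (ne_of_gt (hu l))
    exact h1.sub h2
  have hf_mono : MonotoneOn (fun l => l * p + l ^ 2 / 8 - Real.log (1 - p + p * Real.exp l))
      (Set.Ici 0) := by
    apply monotoneOn_of_deriv_nonneg (convex_Ici 0)
    · exact fun x _ => (hfd x).differentiableAt.continuousAt.continuousWithinAt
    · intro x _; exact (hfd x).differentiableAt.differentiableWithinAt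
    · intro x hx
      rw [(hfd x).deriv]
      rw [interior_Ici] at hx
      have := hg_mono (le_of_lt hx)
      simp only at this
      linarith [hg0 ▸ this]
  intro l hl
  have hmono := hf_mono Set.self_mem_Ici (Set.mem_Ici.mpr hl) hl
  simp only at hmono
  have hf0 : (0:ℝ) * p + (0:ℝ) ^ 2 / 8 - Real.log (1 - p + p * Real.exp 0) = 0 := by
    norm_num
  have hlog : Real.log (1 - p + p * Real.exp l) ≤ l * p + l ^ 2 / 8 := by
    rw [hf0] at hmono; linarith
  calc 1 - p + p * Real.exp l = Real.exp (Real.log (1 - p + p * Real.exp l)) :=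
        (Real.exp_log (hu l)).symm
    _ ≤ Real.exp (l * p + l ^ 2 / 8) := Real.exp_le_exp.mpr hlog

set_option maxHeartbeats 2000000 in
theorem stmt_12 (ε δ dtil : ℝ) (hε : 0 < ε) (hδ0 : 0 ≤ δ) (hδ1 : δ ≤ 1)
    (hd0 : 0 < dtil) (hd1 : dtil < 1) (k : ℕ) (hk : 1 ≤ k)
    (P₀ P₁ : Fin 4 → ℝ)
    (hP₀ : P₀ = ![δ, (1 - δ) * Real.exp ε / (1 + Real.exp ε), (1 - δ) / (1 + Real.exp ε), 0])
    (hP₁ : P₁ = ![0, (1 - δ) / (1 + Real.exp ε), (1 - δ) * Real.exp ε / (1 + Real.exp ε), δ])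
    (etil : ℝ)
    (hetil : etil = k * ε * (Real.exp ε - 1) / (Real.exp ε + 1)
        + ε * Real.sqrt (2 * k * Real.log (1 / dtil))) :
    ∀ S : Finset (Fin k → Fin 4),
      ∑ x ∈ S, ∏ j, P₀ (x j) - Real.exp etil * ∑ x ∈ S, ∏ j, P₁ (x j) ≤
        1 - (1 - δ) ^ k * (1 - dtil) := by
  intro S
  classical
  have hE0 : 0 < Real.exp ε := Real.exp_pos ε
  have hE1 : 1 < Real.exp ε := by
    have := Real.exp_lt_exp.mpr hε; simpa using this
  have hA : 0 < 1 + Real.exp ε := by linarith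
  have hA' : (1 : ℝ) + Real.exp ε ≠ 0 := ne_of_gt hA
  obtain ⟨p, hp⟩ : ∃ p : ℝ, p = Real.exp ε / (1 + Real.exp ε) := ⟨_, rfl⟩
  obtain ⟨q, hq⟩ : ∃ q : ℝ, q = 1 / (1 + Real.exp ε) := ⟨_, rfl⟩
  have hp0 : 0 < p := by rw [hp]; positivity
  have hq0 : 0 < q := by rw [hq]; positivity
  have hpq : p + q = 1 := by rw [hp, hq]; field_simp; ring
  have hp1 : p < 1 := by linarith
  have hqEq : p = Real.exp ε * q := by rw [hp, hq]; field_simp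
  have h1δ : 0 ≤ 1 - δ := by linarith
  have hAk : 0 ≤ (1 - δ) ^ k := pow_nonneg h1δ k
  obtain ⟨L, hLdef⟩ : ∃ L : ℝ, L = Real.log (1 / dtil) := ⟨_, rfl⟩
  have hL : 0 < L := by
    rw [hLdef]
    apply Real.log_pos
    rw [one_div]
    exact (one_lt_inv_iff₀).mpr ⟨hd0, hd1⟩
  have hk0 : (0:ℝ) < (k:ℝ) := by exact_mod_cast hk
  obtain ⟨t, htdef⟩ : ∃ t : ℝ, t = Real.sqrt ((k:ℝ) * L / 2) := ⟨_, rfl⟩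
  have ht0 : 0 < t := by rw [htdef]; apply Real.sqrt_pos.mpr; positivity
  have ht2 : t ^ 2 = (k:ℝ) * L / 2 := by rw [htdef, Real.sq_sqrt (by positivity)]
  obtain ⟨lam, hlamdef⟩ : ∃ lam : ℝ, lam = 4 * t / (k:ℝ) := ⟨_, rfl⟩
  have hlam0 : 0 < lam := by rw [hlamdef]; positivity
  -- sqrt(2kL) = 2t
  have h2t : Real.sqrt (2 * (k:ℝ) * L) = 2 * t := by
    rw [show (2 * (k:ℝ) * L) = (2:ℝ) ^ 2 * ((k:ℝ) * L / 2) by ring,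
      Real.sqrt_mul (by positivity), Real.sqrt_sq (by norm_num), htdef]
  have hetil2 : etil = ε * (2 * ((k:ℝ) * p + t) - (k:ℝ)) := by
    rw [hetil, ← hLdef, h2t, hp]
    field_simp
    ring
  -- values of P₀, P₁
  have e01 : P₀ 1 = (1 - δ) * p := by rw [hP₀, hp]; simp [Matrix.cons_val_one]; ring
  have e02 : P₀ 2 = (1 - δ) * q := by rw [hP₀, hq]; simp; ring
  have e11 : P₁ 1 = (1 - δ) * q := by rw [hP₁, hq]; simp; ring
  have e12 : P₁ 2 = (1 - δ) * p := by rw [hP₁, hp]; simp [Matrix.cons_val_one]; ring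
  have hP₀nn : ∀ v : Fin 4, 0 ≤ P₀ v := by
    intro v; fin_cases v <;> simp [hP₀] <;> positivity
  have hP₁nn : ∀ v : Fin 4, 0 ≤ P₁ v := by
    intro v; fin_cases v <;> simp [hP₁] <;> positivity
  have hprod0nn : ∀ x : Fin k → Fin 4, 0 ≤ ∏ j, P₀ (x j) :=
    fun x => Finset.prod_nonneg (fun j _ => hP₀nn (x j))
  have hprod1nn : ∀ x : Fin k → Fin 4, 0 ≤ ∏ j, P₁ (x j) :=
    fun x => Finset.prod_nonneg (fun j _ => hP₁nn (x j))
  -- helper for combining powers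
  have hpow : ∀ (m : ℕ), m ≤ k → ∀ a b : ℝ,
      ((1-δ)*a)^m * ((1-δ)*b)^(k-m) = (1-δ)^k * (a^m * b^(k-m)) := by
    intro m hm a b
    rw [mul_pow, mul_pow, show ((1-δ)^m * a^m * ((1-δ)^(k-m) * b^(k-m)))
        = ((1-δ)^m * (1-δ)^(k-m)) * (a^m * b^(k-m)) by ring, ← pow_add,
      show m + (k - m) = k from by omega]
  -- the indicator-type bound function
  set chi : (Fin k → Fin 4) → ℝ :=
    fun x => if (k:ℝ) * p + t < (mcount x : ℝ) then p ^ mcount x * q ^ (k - mcount x) else 0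
    with hchidef
  have hchinn : ∀ x, 0 ≤ chi x := by
    intro x
    rw [hchidef]
    dsimp only
    split
    · positivity
    · exact le_refl 0
  -- key pointwise bound on S ∩ G
  have key1 : ∀ x ∈ S ∩ Gset k,
      (∏ j, P₀ (x j)) - Real.exp etil * ∏ j, P₁ (x j) ≤ (1-δ)^k * chi x := by
    intro x hx
    have hxG := (mem_Gset x).mp (Finset.mem_of_mem_inter_right hx)
    have hm := mcount_le x
    rw [aux_prod_split x hxG P₀, aux_prod_split x hxG P₁, e01, e02, e11, e12,
      hpow (mcount x) hm p q, hpow (mcount x) hm q p]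
    rw [hchidef]
    dsimp only
    by_cases hbad : (k:ℝ) * p + t < (mcount x : ℝ)
    · rw [if_pos hbad]
      have h1 : 0 ≤ Real.exp etil * ((1-δ)^k * (q^(mcount x) * p^(k-mcount x))) := by
        apply mul_nonneg (le_of_lt (Real.exp_pos _))
        apply mul_nonneg hAk
        apply mul_nonneg (pow_nonneg (le_of_lt hq0) _) (pow_nonneg (le_of_lt hp0) _)
      linarith
    · rw [if_neg hbad]
      push_neg at hbad
      have hmain : p^(mcount x) * q^(k-mcount x)
          ≤ Real.exp etil * (q^(mcount x) * p^(k-mcount x)) := by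
        have hh1 : p^(mcount x) * q^(k-mcount x) = (Real.exp ε)^(mcount x) * q^k := by
          rw [hqEq, mul_pow, mul_assoc, ← pow_add,
            show mcount x + (k - mcount x) = k from by omega]
        have hh2 : q^(mcount x) * p^(k-mcount x) = (Real.exp ε)^(k-mcount x) * q^k := by
          rw [hqEq, mul_pow, show q ^ mcount x * ((Real.exp ε)^(k-mcount x) * q^(k-mcount x))
              = (Real.exp ε)^(k-mcount x) * (q^(mcount x) * q^(k-mcount x)) by ring, ← pow_add,
            show mcount x + (k - mcount x) = k from by omega]
        rw [hh1, hh2, ← mul_assoc]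
        apply mul_le_mul_of_nonneg_right _ (pow_nonneg (le_of_lt hq0) k)
        have hexp1 : (Real.exp ε)^(mcount x) = Real.exp ((mcount x : ℝ) * ε) :=
          (Real.exp_nat_mul ε (mcount x)).symm
        have hexp2 : (Real.exp ε)^(k - mcount x) = Real.exp (((k - mcount x : ℕ) : ℝ) * ε) :=
          (Real.exp_nat_mul ε (k - mcount x)).symm
        rw [hexp1, hexp2, ← Real.exp_add]
        apply Real.exp_le_exp.mpr
        have hcast : ((k - mcount x : ℕ) : ℝ) = (k:ℝ) - (mcount x : ℝ) := by
          rw [Nat.cast_sub hm]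
        rw [hcast, hetil2]
        nlinarith [mul_le_mul_of_nonneg_left hbad (le_of_lt hε)]
      have h2 : (1-δ)^k * (p^(mcount x)*q^(k-mcount x))
          ≤ (1-δ)^k * (Real.exp etil * (q^(mcount x)*p^(k-mcount x))) :=
        mul_le_mul_of_nonneg_left hmain hAk
      have h3 : (1-δ)^k * (Real.exp etil * (q^(mcount x)*p^(k-mcount x)))
          = Real.exp etil * ((1-δ)^k * (q^(mcount x)*p^(k-mcount x))) := by ring
      linarith
  -- Chernoff bound: sum of chi over G is at most dtil
  have chernoff : ∑ x ∈ Gset k, chi x ≤ dtil := by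
    have step1 : ∀ x ∈ Gset k, chi x ≤
        Real.exp (-(lam * ((k:ℝ)*p + t))) * ((p * Real.exp lam) ^ mcount x * q ^ (k - mcount x)) := by
      intro x _
      have hrw : Real.exp (-(lam * ((k:ℝ)*p + t))) * ((p * Real.exp lam) ^ mcount x * q ^ (k - mcount x))
          = Real.exp (lam * ((mcount x : ℝ) - ((k:ℝ)*p + t))) * (p ^ mcount x * q ^ (k - mcount x)) := by
        rw [mul_pow, ← Real.exp_nat_mul,
          show lam * ((mcount x : ℝ) - ((k:ℝ)*p + t)) = -(lam * ((k:ℝ)*p + t)) + (mcount x : ℝ) * lam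
            by ring, Real.exp_add]
        ring
      rw [hrw, hchidef]
      dsimp only
      split
      · rename_i hbad
        have h1 : (1:ℝ) ≤ Real.exp (lam * ((mcount x : ℝ) - ((k:ℝ)*p + t))) := by
          apply Real.one_le_exp
          nlinarith
        nlinarith [pow_nonneg (le_of_lt hp0) (mcount x), pow_nonneg (le_of_lt hq0) (k - mcount x),
          mul_nonneg (pow_nonneg (le_of_lt hp0) (mcount x)) (pow_nonneg (le_of_lt hq0) (k - mcount x))]
      · positivity
    calc ∑ x ∈ Gset k, chi x
        ≤ ∑ x ∈ Gset k, Real.exp (-(lam * ((k:ℝ)*p + t))) *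
            ((p * Real.exp lam) ^ mcount x * q ^ (k - mcount x)) := Finset.sum_le_sum step1
      _ = Real.exp (-(lam * ((k:ℝ)*p + t))) *
            ∑ x ∈ Gset k, (p * Real.exp lam) ^ mcount x * q ^ (k - mcount x) := by
          rw [Finset.mul_sum]
      _ = Real.exp (-(lam * ((k:ℝ)*p + t))) * (p * Real.exp lam + q) ^ k := by
          rw [aux_sumG_pow]
      _ ≤ Real.exp (-(lam * ((k:ℝ)*p + t))) * (Real.exp (lam * p + lam ^ 2 / 8)) ^ k := by
          apply mul_le_mul_of_nonneg_left _ (le_of_lt (Real.exp_pos _))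
          apply pow_le_pow_left₀ (by positivity)
          have := hoeff_bernoulli p hp0 hp1 lam (le_of_lt hlam0)
          calc p * Real.exp lam + q = 1 - p + p * Real.exp lam := by linarith [hpq]
            _ ≤ Real.exp (lam * p + lam ^ 2 / 8) := this
      _ = Real.exp (-(lam * ((k:ℝ)*p + t)) + (k:ℝ) * (lam * p + lam ^ 2 / 8)) := by
          rw [← Real.exp_nat_mul, ← Real.exp_add]
      _ = Real.exp (-L) := by
          congr 1
          have htt : t * t = (k:ℝ) * L / 2 := by rw [← ht2]; ring
          have hkne : (k:ℝ) ≠ 0 := ne_of_gt hk0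
          have hlk : lam * (k:ℝ) = 4 * t := by rw [hlamdef]; field_simp
          have h2 : lam * t = 2 * L := by
            have e : lam * t = 4 * (t * t) / (k:ℝ) := by rw [hlamdef]; ring
            rw [e, htt]
            field_simp
            ring
          have h1 : -(lam*((k:ℝ)*p+t)) + (k:ℝ)*(lam*p + lam^2/8)
              = -(lam*t) + (lam*(k:ℝ))*lam/8 := by ring
          rw [h1, hlk, show -(lam*t) + 4*t*lam/8 = -(lam*t)/2 by ring, h2]
          ring
      _ = dtil := by
          rw [hLdef, one_div, Real.log_inv, neg_neg, Real.exp_log hd0]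
  -- sum over S ∩ G
  have key2 : ∑ x ∈ S ∩ Gset k, ((∏ j, P₀ (x j)) - Real.exp etil * ∏ j, P₁ (x j))
      ≤ (1-δ)^k * dtil := by
    calc ∑ x ∈ S ∩ Gset k, ((∏ j, P₀ (x j)) - Real.exp etil * ∏ j, P₁ (x j))
        ≤ ∑ x ∈ S ∩ Gset k, (1-δ)^k * chi x := Finset.sum_le_sum key1
      _ = (1-δ)^k * ∑ x ∈ S ∩ Gset k, chi x := by rw [Finset.mul_sum]
      _ ≤ (1-δ)^k * ∑ x ∈ Gset k, chi x := by
          apply mul_le_mul_of_nonneg_left _ hAk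
          apply Finset.sum_le_sum_of_subset_of_nonneg (Finset.inter_subset_right)
          intro x _ _; exact hchinn x
      _ ≤ (1-δ)^k * dtil := mul_le_mul_of_nonneg_left chernoff hAk
  -- sum over S \ G
  have hsumall : ∑ x : Fin k → Fin 4, ∏ j, P₀ (x j) = 1 := by
    rw [aux_sum_univ]
    have h : P₀ 0 + P₀ 1 + P₀ 2 + P₀ 3 = 1 := by
      rw [hP₀]
      simp
      field_simp
      ring
    rw [h, one_pow]
  have hsumG : ∑ x ∈ Gset k, ∏ j, P₀ (x j) = (1-δ)^k := by
    calc ∑ x ∈ Gset k, ∏ j, P₀ (x j)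
        = ∑ x ∈ Gset k, (P₀ 1) ^ mcount x * (P₀ 2) ^ (k - mcount x) := by
          apply Finset.sum_congr rfl
          intro x hx
          exact aux_prod_split x ((mem_Gset x).mp hx) P₀
      _ = (P₀ 1 + P₀ 2) ^ k := aux_sumG_pow k _ _
      _ = (1-δ)^k := by rw [e01, e02]; congr 1; have := hpq; nlinarith [hpq]
  have key3 : ∑ x ∈ S \ Gset k, ((∏ j, P₀ (x j)) - Real.exp etil * ∏ j, P₁ (x j))
      ≤ 1 - (1-δ)^k := by
    calc ∑ x ∈ S \ Gset k, ((∏ j, P₀ (x j)) - Real.exp etil * ∏ j, P₁ (x j))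
        ≤ ∑ x ∈ S \ Gset k, ∏ j, P₀ (x j) := by
          apply Finset.sum_le_sum
          intro x _
          have : 0 ≤ Real.exp etil * ∏ j, P₁ (x j) :=
            mul_nonneg (le_of_lt (Real.exp_pos _)) (hprod1nn x)
          linarith
      _ ≤ ∑ x ∈ Finset.univ \ Gset k, ∏ j, P₀ (x j) := by
          apply Finset.sum_le_sum_of_subset_of_nonneg
          · exact Finset.sdiff_subset_sdiff (Finset.subset_univ S) (le_refl _)
          · intro x _ _; exact hprod0nn x
      _ = (∑ x : Fin k → Fin 4, ∏ j, P₀ (x j)) - ∑ x ∈ Gset k, ∏ j, P₀ (x j) :=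
          Finset.sum_sdiff_eq_sub (Finset.subset_univ _)
      _ = 1 - (1-δ)^k := by rw [hsumall, hsumG]
  -- combine
  have hsplit : ∀ f : (Fin k → Fin 4) → ℝ,
      ∑ x ∈ S, f x = ∑ x ∈ S ∩ Gset k, f x + ∑ x ∈ S \ Gset k, f x :=
    fun f => (Finset.sum_inter_add_sum_sdiff S (Gset k) f).symm
  rw [hsplit (fun x => ∏ j, P₀ (x j)), hsplit (fun x => ∏ j, P₁ (x j))]
  have d1 : ∑ x ∈ S ∩ Gset k, ((∏ j, P₀ (x j)) - Real.exp etil * ∏ j, P₁ (x j))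
      = ∑ x ∈ S ∩ Gset k, ∏ j, P₀ (x j) - Real.exp etil * ∑ x ∈ S ∩ Gset k, ∏ j, P₁ (x j) := by
    rw [Finset.sum_sub_distrib, Finset.mul_sum]
  have d2 : ∑ x ∈ S \ Gset k, ((∏ j, P₀ (x j)) - Real.exp etil * ∏ j, P₁ (x j))
      = ∑ x ∈ S \ Gset k, ∏ j, P₀ (x j) - Real.exp etil * ∑ x ∈ S \ Gset k, ∏ j, P₁ (x j) := by
    rw [Finset.sum_sub_distrib, Finset.mul_sum]
  have hfinal : 1 - (1-δ)^k * (1 - dtil) = (1-δ)^k * dtil + (1 - (1-δ)^k) := by ring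
  rw [hfinal]
  have := key2
  have := key3
  rw [d1] at key2
  rw [d2] at key3
  linarith
end
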